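/- arXiv:2509.08954 — 5 statements merged into one kernel-verified Lean document; each statement's English description precedes it below -/
import Mathlib

section
/- For f(x) = (L/2)x² on ℝ with L > 0, and the inexact gradient update x_{n+1} = (1 - α(1+ε_n))x_n where α = ηL and |ε_n| ≤ δ with 0 < δ < 1: choosing ε_0 = -δ and ε_1 = +δ, the quantity Δ_0 - Δ_1 (with Δ_n = f(x_n) - f(x_{n+1})) equals L·x_0²·α·S(α), where S(α) = (1-δ)(1 - α(1-δ)/2) - (1+δ)(1 - α(1-δ))²(1 - α(1+δ)/2), and S(0) = -2δ < 0. -/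
theorem inexact_gd_quadratic_two_step_identity
    (L δ x₀ η : ℝ) (hL : 0 < L) (hδ : 0 < δ) (hδ1 : δ < 1) (hx₀ : x₀ ≠ 0) (hη : 0 < η)
    (α : ℝ) (hα : α = η * L)
    (x₁ x₂ : ℝ) (hx₁ : x₁ = (1 - α * (1 - δ)) * x₀) (hx₂ : x₂ = (1 - α * (1 + δ)) * x₁)
    (f : ℝ → ℝ) (hf : ∀ x, f x = L / 2 * x ^ 2)
    (Δ₀ Δ₁ : ℝ) (hΔ₀ : Δ₀ = f x₀ - f x₁) (hΔ₁ : Δ₁ = f x₁ - f x₂)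
    (S : ℝ → ℝ)
    (hS : ∀ a, S a = (1 - δ) * (1 - a * (1 - δ) / 2)
        - (1 + δ) * (1 - a * (1 - δ)) ^ 2 * (1 - a * (1 + δ) / 2)) :
    Δ₀ - Δ₁ = L * x₀ ^ 2 * α * S α ∧ S 0 = -2 * δ ∧ S 0 < 0 := by
  refine ⟨?_, ?_, ?_⟩
  · simp only [hΔ₀, hΔ₁, hf, hx₂, hx₁, hS]; ring
  · rw [hS]; ring
  · rw [hS]; nlinarith
end

section
/- For every L > 0, δ ∈ (0,1), and x_0 ≠ 0, there exists α* > 0 such that for all stepsizes η with 0 < ηL < α*, running the relatively-inexact gradient update on f(x) = (L/2)x² with noise choices ε_0 = -δ, ε_1 = +δ yields Δ_0 < Δ_1; hence the optimization curve (f(x_n)) is not convex at its first triple. -/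
lemma gd_key (α δ : ℝ) (hα : 0 < α) (hδ : 0 < δ) (hδ1 : δ < 1) (hαs : α < 4 * δ / 9) :
    0 < (1 - α * (1 - δ))^2 * (1 + δ) * (2 - α * (1 + δ)) - (1 - δ) * (2 - α * (1 - δ)) := by
  have hα1 : α < 1 := by nlinarith
  have e : (1 - α * (1 - δ))^2 * (1 + δ) * (2 - α * (1 + δ)) - (1 - δ) * (2 - α * (1 - δ))
      = 4*δ - 4*α*(1+δ-δ^2) + 4*α^2*(1-δ^2) - α^3*(1-δ^2)^2 := by ring
  rw [e]
  have hd2 : (0:ℝ) ≤ 1 - δ^2 := by nlinarith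
  have hsq : (1-δ^2)^2 ≤ 1 := by nlinarith
  have h1 : α^3*(1-δ^2)^2 ≤ α := by
    have h3 : α^3 ≤ α := by nlinarith
    nlinarith [mul_le_mul_of_nonneg_left hsq (pow_pos hα 3).le]
  have h2 : (0:ℝ) ≤ 4*α^2*(1-δ^2) := by positivity
  nlinarith [mul_pos hα hδ, mul_nonneg hα.le (sq_nonneg δ)]

theorem inexact_gd_small_stepsize_nonconvex_first_triple
    (L δ x₀ : ℝ) (hL : 0 < L) (hδ : 0 < δ) (hδ1 : δ < 1) (hx₀ : x₀ ≠ 0) :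
    ∃ αs : ℝ, 0 < αs ∧ ∀ η : ℝ, 0 < η * L → η * L < αs →
      ∀ x : ℕ → ℝ, x 0 = x₀ →
        x 1 = x 0 - η * (L * x 0 + (-δ) * L * x 0) →
        x 2 = x 1 - η * (L * x 1 + δ * L * x 1) →
        (L / 2 * (x 0) ^ 2 - L / 2 * (x 1) ^ 2) <
          (L / 2 * (x 1) ^ 2 - L / 2 * (x 2) ^ 2) := by
  refine ⟨4 * δ / 9, by linarith, ?_⟩
  intro η hη hηs x h0 h1 h2
  set α := η * L with hα
  have hg := gd_key α δ hη hδ hδ1 hηs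
  have hx2 : x₀ ^ 2 > 0 := by positivity
  have key : (L / 2 * (x 1) ^ 2 - L / 2 * (x 2) ^ 2) - (L / 2 * (x 0) ^ 2 - L / 2 * (x 1) ^ 2)
      = L / 2 * x₀ ^ 2 * α *
        ((1 - α * (1 - δ))^2 * (1 + δ) * (2 - α * (1 + δ)) - (1 - δ) * (2 - α * (1 - δ))) := by
    rw [h2, h1, h0, hα]; ring
  nlinarith [mul_pos (mul_pos (mul_pos (by linarith : (0:ℝ) < L/2) hx2) hη) hg]
end

section
/- There is no function η_max : (0,1) × (0,∞) → (0,∞) such that for every L > 0, δ ∈ (0,1), every one-dimensional quadratic f(x) = (L/2)x², every x_0 ≠ 0, every admissible relative-noise sequence |e_n| ≤ δ|f'(x_n)|, and every η ∈ (0, η_max(δ,L)], the sequence (f(x_n)) generated by x_{n+1} = x_n - η(f'(x_n)+e_n) is convex. -/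
theorem no_universal_convexity_preserving_stepsize :
    ¬ ∃ ηmax : ℝ → ℝ → ℝ,
      (∀ δ L : ℝ, 0 < δ → δ < 1 → 0 < L → 0 < ηmax δ L) ∧
      (∀ L δ : ℝ, 0 < L → 0 < δ → δ < 1 →
        ∀ x e : ℕ → ℝ, x 0 ≠ 0 →
          (∀ n, |e n| ≤ δ * |L * x n|) →
          ∀ η : ℝ, 0 < η → η ≤ ηmax δ L →
            (∀ n, x (n + 1) = x n - η * (L * x n + e n)) →
            ∀ n : ℕ, L / 2 * (x (n + 1)) ^ 2 - L / 2 * (x n) ^ 2 ≤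
              L / 2 * (x (n + 2)) ^ 2 - L / 2 * (x (n + 1)) ^ 2) := by
  rintro ⟨ηmax, hpos, h⟩
  set η : ℝ := min (ηmax (1/2) 1) (1/2) with hηdef
  have hη0 : 0 < η :=
    lt_min (hpos (1/2) 1 (by norm_num) (by norm_num) (by norm_num)) (by norm_num)
  have hη2 : η ≤ 1/2 := min_le_right _ _
  have hηle : η ≤ ηmax (1/2) 1 := min_le_left _ _
  set ε : ℕ → ℝ := fun n => if n = 0 then -(1/2) else if n = 1 then 1/2 else 0 with hεdef
  set x : ℕ → ℝ := fun n =>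
    Nat.rec (1 : ℝ) (fun m xm => xm * (1 - η * (1 + ε m))) n with hxdef
  have hx0 : x 0 = 1 := rfl
  have hxsucc : ∀ n, x (n + 1) = x n * (1 - η * (1 + ε n)) := fun n => rfl
  set e : ℕ → ℝ := fun n => ε n * x n with hedef
  have hεbd : ∀ n, |ε n| ≤ 1/2 := by
    intro n
    simp only [hεdef]
    split_ifs <;> norm_num [abs_le]
  have hebd : ∀ n, |e n| ≤ (1/2 : ℝ) * |(1 : ℝ) * x n| := by
    intro n
    simp only [hedef, one_mul, abs_mul]
    exact mul_le_mul_of_nonneg_right (hεbd n) (abs_nonneg _)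
  have hrec : ∀ n, x (n + 1) = x n - η * (1 * x n + e n) := by
    intro n
    rw [hxsucc n]
    simp only [hedef, one_mul]
    ring
  have key := h 1 (1/2) (by norm_num) (by norm_num) (by norm_num) x e
    (by rw [hx0]; norm_num) hebd η hη0 hηle hrec 0
  have hx1 : x 1 = 1 - η / 2 := by
    have h1 := hxsucc 0
    norm_num [hεdef, hx0] at h1
    rw [h1]; ring
  have hx2 : x 2 = (1 - η / 2) * (1 - 3 * η / 2) := by
    have h2 := hxsucc 1
    norm_num [hεdef, hx1] at h2
    rw [h2]; ring
  norm_num [hx0, hx1, hx2] at key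
  have ha : (9/16 : ℝ) ≤ (1 - η/2)^2 := by nlinarith
  have hb : (15/8 : ℝ) ≤ 3 - 9*η/4 := by linarith
  have hab : (9/16 : ℝ) * (15/8) ≤ (1 - η/2)^2 * (3 - 9*η/4) :=
    mul_le_mul ha hb (by linarith) (sq_nonneg _)
  nlinarith [key, mul_le_mul_of_nonneg_left hab hη0.le, sq_nonneg η, hη0]
end

section
/- Let f(x) = (1/2)xᵀQx with Q symmetric positive semidefinite, and x_{n+1} = (I - ηQ)x_n with ηλ_i ∈ [0,2] for every eigenvalue λ_i of Q. Then the value sequence f(x_n) is convex: f(x_n) - f(x_{n+1}) is nonincreasing in n, i.e., f(x_{n+2}) - 2f(x_{n+1}) + f(x_n) ≥ 0 for all n. -/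
/-!
Write `q v = v ⬝ᵥ Q *ᵥ v` and `A = 1 - η • Q`, so that `x (n + 1) = A *ᵥ x n`. Since `A` is
symmetric and commutes with `Q`, moving one factor `A` across the form turns the cross term
`A² y ⬝ᵥ Q *ᵥ y` into `q (A y)`; hence the second difference `q (A² y) - 2 q (A y) + q y`
equals `q (A² y - y)`, which is nonnegative because `Q` is positive semidefinite.
-/

open Matrix

namespace Matrix

variable {n R : Type*} [Fintype n] [CommRing R]

theorem IsSymm.dotProduct_mulVec {S : Matrix n n R} (hS : S.IsSymm) (u v : n → R) :
    u ⬝ᵥ S *ᵥ v = S *ᵥ u ⬝ᵥ v := by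
  rw [Matrix.dotProduct_mulVec, ← mulVec_transpose, hS.eq]

theorem quadForm_mulVec_mulVec_sub_self {Q A : Matrix n n R} (hQ : Q.IsSymm) (hA : A.IsSymm)
    (hAQ : Commute A Q) (y : n → R) :
    (A *ᵥ A *ᵥ y - y) ⬝ᵥ Q *ᵥ (A *ᵥ A *ᵥ y - y) =
      A *ᵥ A *ᵥ y ⬝ᵥ Q *ᵥ (A *ᵥ A *ᵥ y) - 2 * (A *ᵥ y ⬝ᵥ Q *ᵥ (A *ᵥ y)) + y ⬝ᵥ Q *ᵥ y := by
  have hcross : A *ᵥ A *ᵥ y ⬝ᵥ Q *ᵥ y = A *ᵥ y ⬝ᵥ Q *ᵥ (A *ᵥ y) := by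
    rw [← hA.dotProduct_mulVec, mulVec_mulVec, hAQ.eq, ← mulVec_mulVec]
  have hcross' : y ⬝ᵥ Q *ᵥ (A *ᵥ A *ᵥ y) = A *ᵥ A *ᵥ y ⬝ᵥ Q *ᵥ y := by
    rw [hQ.dotProduct_mulVec, dotProduct_comm]
  simp only [mulVec_sub, dotProduct_sub, sub_dotProduct, hcross', hcross]
  ring

theorem PosSemidef.quadForm_second_difference_nonneg [PartialOrder R] [StarRing R] [TrivialStar R]
    {Q A : Matrix n n R} (hQ : Q.PosSemidef) (hA : A.IsSymm) (hAQ : Commute A Q) (y : n → R) :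
    0 ≤ A *ᵥ A *ᵥ y ⬝ᵥ Q *ᵥ (A *ᵥ A *ᵥ y) - 2 * (A *ᵥ y ⬝ᵥ Q *ᵥ (A *ᵥ y)) + y ⬝ᵥ Q *ᵥ y := by
  rw [← quadForm_mulVec_mulVec_sub_self (isHermitian_iff_isSymm.mp hQ.isHermitian) hA hAQ]
  simpa only [star_trivial] using hQ.dotProduct_mulVec_nonneg (A *ᵥ A *ᵥ y - y)

end Matrix

theorem quadratic_gd_values_convex_general
    (d : ℕ) (Q : Matrix (Fin d) (Fin d) ℝ) (hQ : Q.PosSemidef) (η : ℝ)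
    (x : ℕ → (Fin d → ℝ)) (hx : ∀ n, x (n + 1) = x n - η • Q.mulVec (x n)) :
    ∀ n : ℕ, 0 ≤ (1 : ℝ) / 2 * (x (n + 2) ⬝ᵥ Q.mulVec (x (n + 2)))
      - 2 * ((1 : ℝ) / 2 * (x (n + 1) ⬝ᵥ Q.mulVec (x (n + 1))))
      + (1 : ℝ) / 2 * (x n ⬝ᵥ Q.mulVec (x n)) := by
  set A := 1 - η • Q
  have hstep (n : ℕ) : x (n + 1) = A *ᵥ x n := by
    rw [hx, sub_mulVec, one_mulVec, smul_mulVec]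
  have hA : A.IsSymm := isSymm_one.sub ((isHermitian_iff_isSymm.mp hQ.isHermitian).smul η)
  have hAQ : Commute A Q := (Commute.one_left Q).sub_left ((Commute.refl Q).smul_left η)
  intro n
  have h := hQ.quadForm_second_difference_nonneg hA hAQ (x n)
  rw [← hstep, ← hstep] at h
  linarith

theorem quadratic_gd_values_convex
    (d : ℕ) (Q : Matrix (Fin d) (Fin d) ℝ) (hQ : Q.PosSemidef) (η : ℝ) (hη : 0 ≤ η)
    (hev : ∀ μ : ℝ, Module.End.HasEigenvalue Q.mulVecLin μ → 0 ≤ η * μ ∧ η * μ ≤ 2)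
    (x : ℕ → (Fin d → ℝ)) (hx : ∀ n, x (n + 1) = x n - η • Q.mulVec (x n)) :
    ∀ n : ℕ, 0 ≤ (1 : ℝ) / 2 * (x (n + 2) ⬝ᵥ Q.mulVec (x (n + 2)))
      - 2 * ((1 : ℝ) / 2 * (x (n + 1) ⬝ᵥ Q.mulVec (x (n + 1))))
      + (1 : ℝ) / 2 * (x n ⬝ᵥ Q.mulVec (x n)) :=
  quadratic_gd_values_convex_general d Q hQ η x hx
end

section
/- For the two-step gradient-difference scheme on f(x) = (L/2)x² with θ = 1/L - η, η ∈ [2/(3L), 1/L), and initialization x_{-1} = x_0 ≠ 0: the iterates satisfy x_1 = x_2 = s·x_0 and x_3 = s²·x_0 with s = 1 - ηL ∈ (0, 1/3], so Δ_1 := f(x_1)-f(x_2) = 0 while Δ_2 := f(x_2)-f(x_3) = (L/2)t(2-t)x_1² > 0 where t = ηL; hence Δ_2 > Δ_1 and the value sequence (f(x_n)) is not convex. -/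
theorem two_step_scheme_nonconvex_curve
    (L η θ : ℝ) (hL : 0 < L) (hη : 2 / (3 * L) ≤ η) (hη1 : η < 1 / L)
    (hθ : θ = 1 / L - η)
    (t s : ℝ) (ht : t = η * L) (hs : s = 1 - t)
    (x : ℤ → ℝ) (hinit : x (-1) = x 0) (hx0 : x 0 ≠ 0)
    (hx : ∀ n : ℤ, 0 ≤ n → x (n + 1) = x n - η * (L * x n) - θ * (L * x n - L * x (n - 1)))
    (f : ℝ → ℝ) (hf : ∀ y, f y = L / 2 * y ^ 2) :
    x 1 = s * x 0 ∧ x 2 = s * x 0 ∧ x 3 = s ^ 2 * x 0 ∧ 0 < s ∧ s ≤ 1 / 3 ∧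
    f (x 1) - f (x 2) = 0 ∧
    f (x 2) - f (x 3) = L / 2 * t * (2 - t) * (x 1) ^ 2 ∧
    f (x 1) - f (x 2) < f (x 2) - f (x 3) ∧
    ¬ (∀ n : ℕ, f (x (n : ℤ)) - f (x ((n : ℤ) + 1)) ≥
        f (x ((n : ℤ) + 1)) - f (x ((n : ℤ) + 2))) := by
  subst hθ ht hs
  have hL' : L ≠ 0 := ne_of_gt hL
  have h0 := hx 0 (by norm_num)
  have h1 := hx 1 (by norm_num)
  have h2 := hx 2 (by norm_num)
  norm_num at h0 h1 h2
  have ht23 : 2 / 3 ≤ η * L := by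
    rw [div_le_iff₀ (by positivity)] at hη
    nlinarith
  have ht1 : η * L < 1 := by
    rw [lt_div_iff₀ hL] at hη1
    linarith
  have hx1 : x 1 = (1 - η * L) * x 0 := by
    rw [h0, hinit]; ring
  have hx2 : x 2 = (1 - η * L) * x 0 := by
    rw [h1, hx1]; field_simp; ring
  have hx3 : x 3 = (1 - η * L) ^ 2 * x 0 := by
    rw [h2, hx2, hx1]; field_simp; ring
  have hs0 : 0 < 1 - η * L := by linarith
  have hs13 : 1 - η * L ≤ 1 / 3 := by linarith
  have hd1 : f (x 1) - f (x 2) = 0 := by rw [hx1, hx2]; ring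
  have hd2 : f (x 2) - f (x 3) = L / 2 * (η * L) * (2 - η * L) * (x 1) ^ 2 := by
    rw [hf, hf, hx2, hx3, hx1]; ring
  have hXne : (1 - η * L) * x 0 ≠ 0 := mul_ne_zero (ne_of_gt hs0) hx0
  have hX2 : 0 < ((1 - η * L) * x 0) ^ 2 :=
    lt_of_le_of_ne (sq_nonneg _) (Ne.symm (pow_ne_zero 2 hXne))
  have hpos : f (x 1) - f (x 2) < f (x 2) - f (x 3) := by
    rw [hd1, hd2, hx1]
    exact mul_pos (mul_pos (mul_pos (by positivity) (by linarith)) (by linarith)) hX2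
  refine ⟨hx1, hx2, hx3, hs0, hs13, hd1, hd2, hpos, fun h => ?_⟩
  have := h 1
  norm_num at this
  linarith
end
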